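/- For every ε > 0 and d ∈ ℕ there exists K̃ > 0, depending only on ε and d, such that for every set E ⊆ [0,1]^d, the sum of λ(Q) over all dyadic cubes Q ⊆ [0,1]^d satisfying 3Q ∩ E ≠ ∅ and sparse(E,7Q) ≥ ε is at most K̃. -/

import Mathlib

/-!
A sparse cube `Q` of level `k` has a point of `7Q` at distance `≳ ε · side(Q)` from `7Q ∩ E`,
hence an `E`-free dyadic subcube of `7Q` (a hole) of level `k + m`, with `m` depending only on `ε`
and `d`; through the point of `E` in `3Q`, the hole lies within a bounded number of its own side
lengths of `E`. Each hole comes from at most `7^d` sparse cubes, so it suffices to bound the total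
volume of such holes. Every hole lies in a maximal `E`-free dyadic cube `P`, and since `E` has a
point near the hole but outside `P`, the hole lies in a boundary layer of `P` of bounded width in
units of the hole's side: the holes `n` levels below `P` have total volume `O(2^{-n}) vol P`.
Summing over `n` and over the pairwise disjoint maximal cubes, which lie in a fixed box around
`[0,1]^d`, gives the bound.
-/

open Metric MeasureTheory
open scoped Classical ENNReal

noncomputable section

/-- The closed unit cube `[0,1]^d` in Euclidean space. -/
def unitCube (d : ℕ) : Set (EuclideanSpace ℝ (Fin d)) := {x | ∀ i, 0 ≤ x i ∧ x i ≤ 1}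

/-- The dyadic cube `Q = Π_i [a_i·2^{-k}, (a_i+1)·2^{-k})`. -/
def dyCube (d k : ℕ) (a : Fin d → ℕ) : Set (EuclideanSpace ℝ (Fin d)) :=
  {x | ∀ i, (a i : ℝ) * 2 ^ (-(k : ℤ)) ≤ x i ∧ x i < ((a i : ℝ) + 1) * 2 ^ (-(k : ℤ))}

/-- The tripled dyadic cube `3Q = Π_i [(a_i-1)·2^{-k}, (a_i+2)·2^{-k})`. -/
def dyCube3 (d k : ℕ) (a : Fin d → ℕ) : Set (EuclideanSpace ℝ (Fin d)) :=
  {x | ∀ i, ((a i : ℝ) - 1) * 2 ^ (-(k : ℤ)) ≤ x i ∧ x i < ((a i : ℝ) + 2) * 2 ^ (-(k : ℤ))}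

/-- The septupled dyadic cube `7Q = Π_i [(a_i-3)·2^{-k}, (a_i+4)·2^{-k})`. -/
def dyCube7 (d k : ℕ) (a : Fin d → ℕ) : Set (EuclideanSpace ℝ (Fin d)) :=
  {x | ∀ i, ((a i : ℝ) - 3) * 2 ^ (-(k : ℤ)) ≤ x i ∧ x i < ((a i : ℝ) + 4) * 2 ^ (-(k : ℤ))}

/-- `sparse(E, 7Q) = sup { dist(x, 7Q ∩ E) : x ∈ 7Q } / side(7Q)` with `side(7Q) = 7·2^{-k}`. -/
def sparse7 {d : ℕ} (E : Set (EuclideanSpace ℝ (Fin d))) (k : ℕ) (a : Fin d → ℕ) : ℝ :=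
  (⨆ x : (dyCube7 d k a),
    Metric.infDist (x : EuclideanSpace ℝ (Fin d)) (dyCube7 d k a ∩ E)) / (7 * 2 ^ (-(k : ℤ)))

namespace CarlesonPacking

variable {d : ℕ}

def dyadicBox (d j : ℕ) (A B : Fin d → ℤ) : Set (EuclideanSpace ℝ (Fin d)) :=
  {x | ∀ i, (A i : ℝ) ≤ x i * 2 ^ j ∧ x i * 2 ^ j < B i}

def dyadicCube (d j : ℕ) (b : Fin d → ℤ) : Set (EuclideanSpace ℝ (Fin d)) :=
  dyadicBox d j b (b + 1)

lemma mem_dyadicCube_iff {j : ℕ} {b : Fin d → ℤ} {x : EuclideanSpace ℝ (Fin d)} :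
    x ∈ dyadicCube d j b ↔ ∀ i, ⌊x i * 2 ^ j⌋ = b i := by
  simp [dyadicCube, dyadicBox, Int.floor_eq_iff]

lemma dyadicBox_eq_refine (k m : ℕ) (A B : Fin d → ℤ) :
    dyadicBox d k A B = dyadicBox d (k + m) (fun i => 2 ^ m * A i) (fun i => 2 ^ m * B i) := by
  ext x
  simp only [dyadicBox, Set.mem_ofPred_eq]
  refine forall_congr' fun i => ?_
  have h2 : (0 : ℝ) < 2 ^ m := by positivity
  simp only [Int.cast_mul, Int.cast_pow, Int.cast_ofNat, pow_add, ← mul_assoc]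
  rw [mul_comm (2 ^ m : ℝ) (A i), mul_comm (2 ^ m : ℝ) (B i),
    mul_le_mul_iff_of_pos_right h2, mul_lt_mul_iff_of_pos_right h2]

lemma dyadicCube_subset_dyadicBox {j : ℕ} {A B b : Fin d → ℤ} (h : ∀ i, A i ≤ b i ∧ b i < B i) :
    dyadicCube d j b ⊆ dyadicBox d j A B := by
  intro x hx i
  have hAb : (A i : ℝ) ≤ b i := by exact_mod_cast (h i).1
  have hbB : (b i : ℝ) + 1 ≤ B i := by exact_mod_cast (h i).2
  have := hx i
  simp only [Pi.add_apply, Pi.one_apply, Int.cast_add, Int.cast_one] at this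
  exact ⟨hAb.trans this.1, this.2.trans_le hbB⟩

lemma floor_mem_window {j : ℕ} {A B : Fin d → ℤ} {x : EuclideanSpace ℝ (Fin d)}
    (hx : x ∈ dyadicBox d j A B) (i : Fin d) : A i ≤ ⌊x i * 2 ^ j⌋ ∧ ⌊x i * 2 ^ j⌋ < B i :=
  ⟨Int.le_floor.2 (hx i).1, Int.floor_lt.2 (hx i).2⟩

lemma mem_dyadicCube_floor (j : ℕ) (x : EuclideanSpace ℝ (Fin d)) :
    x ∈ dyadicCube d j (fun i => ⌊x i * 2 ^ j⌋) :=
  mem_dyadicCube_iff.2 fun _ => rfl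

lemma eq_of_mem_dyadicCube {j : ℕ} {b c : Fin d → ℤ} {x : EuclideanSpace ℝ (Fin d)}
    (hb : x ∈ dyadicCube d j b) (hc : x ∈ dyadicCube d j c) : b = c :=
  funext fun i => (mem_dyadicCube_iff.1 hb i).symm.trans (mem_dyadicCube_iff.1 hc i)

def ancestor (j : ℕ) (b : Fin d → ℤ) (ℓ : ℕ) : Fin d → ℤ := fun i => b i / 2 ^ (j - ℓ)

@[simp] lemma ancestor_self (j : ℕ) (b : Fin d → ℤ) : ancestor j b j = b := by
  funext i
  simp [ancestor]

lemma ancestor_ancestor {ℓ ℓ' j : ℕ} (h : ℓ ≤ ℓ') (h' : ℓ' ≤ j) (b : Fin d → ℤ) :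
    ancestor ℓ' (ancestor j b ℓ') ℓ = ancestor j b ℓ := by
  funext i
  simp only [ancestor]
  rw [Int.ediv_ediv_of_nonneg (by positivity), ← pow_add]
  congr 2
  omega

lemma le_ancestor_add (ℓ n : ℕ) (b : Fin d → ℤ) (i : Fin d) :
    2 ^ n * ancestor (ℓ + n) b ℓ i ≤ b i ∧ b i < 2 ^ n * ancestor (ℓ + n) b ℓ i + 2 ^ n := by
  have h2 : (0 : ℤ) < 2 ^ n := by positivity
  simp only [ancestor, Nat.add_sub_cancel_left]
  constructor
  · rw [mul_comm]; exact Int.ediv_mul_le _ h2.ne'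
  · linarith [Int.lt_ediv_add_one_mul_self (b i) h2]

lemma dyadicCube_subset_ancestor {ℓ j : ℕ} (h : ℓ ≤ j) (b : Fin d → ℤ) :
    dyadicCube d j b ⊆ dyadicCube d ℓ (ancestor j b ℓ) := by
  obtain ⟨n, rfl⟩ := Nat.exists_eq_add_of_le h
  rw [dyadicCube, dyadicCube, dyadicBox_eq_refine ℓ n]
  refine dyadicCube_subset_dyadicBox fun i => ?_
  simpa [mul_add] using le_ancestor_add ℓ n b i

lemma ancestor_eq_of_mem {ℓ j : ℕ} (h : ℓ ≤ j) {b c : Fin d → ℤ} {x : EuclideanSpace ℝ (Fin d)}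
    (hb : x ∈ dyadicCube d j b) (hc : x ∈ dyadicCube d ℓ c) : ancestor j b ℓ = c :=
  eq_of_mem_dyadicCube (dyadicCube_subset_ancestor h b hb) hc

lemma dyadicBox_eq_preimage (j : ℕ) (A B : Fin d → ℤ) :
    dyadicBox d j A B = (MeasurableEquiv.toLp 2 (Fin d → ℝ)).symm ⁻¹'
      Set.univ.pi fun i => Set.Ico ((A i : ℝ) / 2 ^ j) (B i / 2 ^ j) := by
  ext x
  simp [dyadicBox, MeasurableEquiv.coe_toLp_symm, div_le_iff₀, lt_div_iff₀]

lemma measurableSet_dyadicBox (j : ℕ) (A B : Fin d → ℤ) : MeasurableSet (dyadicBox d j A B) := by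
  rw [dyadicBox_eq_preimage]
  exact (MeasurableEquiv.toLp 2 (Fin d → ℝ)).symm.measurable
    (MeasurableSet.univ_pi fun _ => measurableSet_Ico)

lemma volume_dyadicBox (j : ℕ) (A B : Fin d → ℤ) :
    volume (dyadicBox d j A B) = ∏ i, ENNReal.ofReal ((B i - A i) / 2 ^ j) := by
  rw [dyadicBox_eq_preimage, (EuclideanSpace.volume_preserving_symm_measurableEquiv_toLp
    (Fin d)).measure_preimage (MeasurableSet.univ_pi fun _ => measurableSet_Ico).nullMeasurableSet,
    Real.volume_pi_Ico]
  simp [sub_div]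

lemma volume_dyadicCube (j : ℕ) (b : Fin d → ℤ) : volume (dyadicCube d j b) = 2⁻¹ ^ (j * d) := by
  simp [dyadicCube, volume_dyadicBox, ENNReal.ofReal_inv_of_pos, pow_mul, ENNReal.inv_pow]

lemma setOf_zpow_eq_dyadicBox (k : ℕ) (A B : Fin d → ℤ) :
    {x : EuclideanSpace ℝ (Fin d) | ∀ i, (A i : ℝ) * 2 ^ (-(k : ℤ)) ≤ x i ∧
      x i < (B i : ℝ) * 2 ^ (-(k : ℤ))} = dyadicBox d k A B := by
  ext x
  simp [dyadicBox, zpow_neg, ← div_eq_mul_inv, div_le_iff₀, lt_div_iff₀]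

lemma dyCube_eq (k : ℕ) (a : Fin d → ℕ) : dyCube d k a = dyadicCube d k (fun i => a i) := by
  rw [dyadicCube, ← setOf_zpow_eq_dyadicBox]
  simp [dyCube]

lemma dyCube3_eq (k : ℕ) (a : Fin d → ℕ) :
    dyCube3 d k a = dyadicBox d k (fun i => a i - 1) (fun i => a i + 2) := by
  rw [← setOf_zpow_eq_dyadicBox]
  simp [dyCube3]

lemma dyCube7_eq (k : ℕ) (a : Fin d → ℕ) :
    dyCube7 d k a = dyadicBox d k (fun i => a i - 3) (fun i => a i + 4) := by
  rw [← setOf_zpow_eq_dyadicBox]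
  simp [dyCube7]

lemma abs_sub_mul_lt_one_of_mem_dyadicCube {j : ℕ} {b : Fin d → ℤ}
    {x z : EuclideanSpace ℝ (Fin d)} (hx : x ∈ dyadicCube d j b) (hz : z ∈ dyadicCube d j b)
    (i : Fin d) : |x i - z i| * 2 ^ j < 1 := by
  have hxi := hx i
  have hzi := hz i
  simp only [Pi.add_apply, Pi.one_apply, Int.cast_add, Int.cast_one] at hxi hzi
  rw [← abs_of_pos (by positivity : (0 : ℝ) < 2 ^ j), ← abs_mul, abs_lt, sub_mul]
  constructor <;> linarith

lemma dist_le_of_mem_dyadicCube {j : ℕ} {b : Fin d → ℤ} {x z : EuclideanSpace ℝ (Fin d)}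
    (hx : x ∈ dyadicCube d j b) (hz : z ∈ dyadicCube d j b) : dist x z ≤ √d / 2 ^ j := by
  have hcoord : ∀ i, dist (x i) (z i) ^ 2 ≤ (1 / 2 ^ j) ^ 2 := fun i => by
    rw [Real.dist_eq]
    exact pow_le_pow_left₀ (abs_nonneg _)
      ((le_div_iff₀ (by positivity)).2 (abs_sub_mul_lt_one_of_mem_dyadicCube hx hz i).le) 2
  calc dist x z = √(∑ i, dist (x i) (z i) ^ 2) := EuclideanSpace.dist_eq x z
    _ ≤ √(d * (1 / 2 ^ j) ^ 2) := by
        gcongr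
        simpa using Finset.sum_le_sum fun i (_ : i ∈ Finset.univ) => hcoord i
    _ = √d / 2 ^ j := by rw [Real.sqrt_mul (Nat.cast_nonneg d), Real.sqrt_sq (by positivity)]; ring

lemma disjoint_dyadicCube_floor {F : Set (EuclideanSpace ℝ (Fin d))}
    {x : EuclideanSpace ℝ (Fin d)} {j : ℕ} (h : √d / 2 ^ j < infDist x F) :
    Disjoint (dyadicCube d j fun i => ⌊x i * 2 ^ j⌋) F :=
  Set.disjoint_left.2 fun _ hz hzF => (infDist_le_dist_of_mem hzF).not_gt
    ((dist_le_of_mem_dyadicCube (mem_dyadicCube_floor j x) hz).trans_lt h)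

def holes (E : Set (EuclideanSpace ℝ (Fin d))) (c : ℕ) : Set (ℕ × (Fin d → ℤ)) :=
  {p | Disjoint (dyadicCube d p.1 p.2) E ∧ ∃ e ∈ E, ∀ i, |(p.2 i : ℝ) - e i * 2 ^ p.1| ≤ c}

lemma exists_hole_of_sparse {E : Set (EuclideanSpace ℝ (Fin d))} {ε : ℝ} (hε : 0 < ε) {m : ℕ}
    (hm : √d ≤ 7 * ε / 2 * 2 ^ m) {k : ℕ} {a : Fin d → ℕ}
    (hne : (dyCube3 d k a ∩ E).Nonempty) (hsp : ε ≤ sparse7 E k a) :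
    ∃ b : Fin d → ℤ, (∀ i, 2 ^ m * ((a i : ℤ) - 3) ≤ b i ∧ b i < 2 ^ m * ((a i : ℤ) + 4)) ∧
      (k + m, b) ∈ holes E (5 * 2 ^ m) := by
  obtain ⟨e, he3, heE⟩ := hne
  have h2k : (0 : ℝ) < 2 ^ k := by positivity
  have h2m : (0 : ℝ) < 2 ^ m := by positivity
  have hside : (7 : ℝ) * 2 ^ (-(k : ℤ)) = 7 / 2 ^ k := by rw [zpow_neg, zpow_natCast]; ring
  have h7 : e ∈ dyCube7 d k a := by
    rw [dyCube7_eq]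
    rw [dyCube3_eq] at he3
    refine fun i => ⟨le_trans ?_ (he3 i).1, (he3 i).2.trans_le ?_⟩ <;> push_cast <;> linarith
  -- the supremum need not be attained, so settle for a point beating half of it
  obtain ⟨⟨x, hx⟩, hfar⟩ : ∃ x : dyCube7 d k a,
      7 * ε / 2 / 2 ^ k < infDist (x : EuclideanSpace ℝ (Fin d)) (dyCube7 d k a ∩ E) := by
    have : Nonempty (dyCube7 d k a) := ⟨⟨e, h7⟩⟩
    refine exists_lt_of_lt_ciSup (lt_of_lt_of_le ?_ ((le_div_iff₀ (by positivity)).1 hsp))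
    rw [hside]
    field_simp
    linarith
  rw [dyCube7_eq, dyadicBox_eq_refine k m] at hx
  set b : Fin d → ℤ := fun i => ⌊x i * 2 ^ (k + m)⌋
  have hwin := floor_mem_window hx
  have hsub : dyadicCube d (k + m) b ⊆ dyCube7 d k a := by
    rw [dyCube7_eq, dyadicBox_eq_refine k m]
    exact dyadicCube_subset_dyadicBox hwin
  have hsmall : √d / 2 ^ (k + m) ≤ 7 * ε / 2 / 2 ^ k := by
    rw [pow_add, ← div_div, div_right_comm, div_le_div_iff_of_pos_right h2k, div_le_iff₀ h2m]
    exact hm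
  refine ⟨b, hwin, ?_, e, heE, fun i => ?_⟩
  · refine Set.disjoint_left.2 fun z hz hzE => ?_
    exact Set.disjoint_left.1 (disjoint_dyadicCube_floor (hsmall.trans_lt hfar)) hz ⟨hsub hz, hzE⟩
  · rw [dyCube3_eq, dyadicBox_eq_refine k m] at he3
    have hb : ((2 ^ m * ((a i : ℤ) - 3) : ℤ) : ℝ) ≤ b i ∧
        (b i : ℝ) < (2 ^ m * ((a i : ℤ) + 4) : ℤ) :=
      ⟨by exact_mod_cast (hwin i).1, by exact_mod_cast (hwin i).2⟩
    have he := he3 i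
    push_cast at hb he ⊢
    rw [abs_le]
    constructor <;> linarith

lemma card_le_pow_of_forall_mem_Ico {N r : ℕ} (s : Finset (Fin d → Fin N)) (q : Fin d → ℤ)
    (h : ∀ a ∈ s, ∀ i, q i ≤ a i ∧ (a i : ℤ) < q i + r) : s.card ≤ r ^ d := by
  classical
  calc s.card ≤ (Fintype.piFinset fun i => Finset.Ico (q i) (q i + r)).card := by
        refine Finset.card_le_card_of_injOn (fun a i => (a i : ℤ)) (fun a ha => ?_) ?_
        · simpa [Fintype.mem_piFinset] using h a ha
        · intro a _ a' _ haa'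
          funext i
          exact Fin.ext (Int.natCast_inj.1 (congrFun haa' i))
    _ = r ^ d := by simp [Fintype.card_piFinset]

lemma two_pow_mul_inv_two_pow (n : ℕ) : (2 : ℝ≥0∞) ^ n * 2⁻¹ ^ n = 1 := by
  rw [← mul_pow, ENNReal.mul_inv_cancel two_ne_zero ENNReal.ofNat_ne_top, one_pow]

lemma tsum_sparse_le_tsum_holes {E : Set (EuclideanSpace ℝ (Fin d))} {ε : ℝ} (hε : 0 < ε)
    {m : ℕ} (hm : √d ≤ 7 * ε / 2 * 2 ^ m) (k : ℕ) :
    (∑' a : Fin d → Fin (2 ^ k),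
        if (dyCube3 d k (fun i => (a i : ℕ)) ∩ E).Nonempty ∧ ε ≤ sparse7 E k (fun i => (a i : ℕ))
          then volume (dyCube d k (fun i => (a i : ℕ))) else 0)
      ≤ 7 ^ d * 2 ^ (m * d) * ∑' b : Fin d → ℤ,
          (holes E (5 * 2 ^ m)).indicator (fun p => volume (dyadicCube d p.1 p.2)) (k + m, b) := by
  classical
  set S := Finset.univ.filter fun a : Fin d → Fin (2 ^ k) =>
    (dyCube3 d k (fun i => (a i : ℕ)) ∩ E).Nonempty ∧ ε ≤ sparse7 E k (fun i => (a i : ℕ))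
  have hhole : ∀ a, ∃ b : Fin d → ℤ, a ∈ S →
      (∀ i, 2 ^ m * ((a i : ℤ) - 3) ≤ b i ∧ b i < 2 ^ m * ((a i : ℤ) + 4)) ∧
        (k + m, b) ∈ holes E (5 * 2 ^ m) := by
    intro a
    by_cases ha : a ∈ S
    · obtain ⟨b, hb⟩ := exists_hole_of_sparse hε hm (Finset.mem_filter.1 ha).2.1
        (Finset.mem_filter.1 ha).2.2
      exact ⟨b, fun _ => hb⟩
    · exact ⟨0, fun h => absurd h ha⟩
  choose g hg using hhole
  have hfiber : ∀ b ∈ S.image g, (S.filter fun a => g a = b).card ≤ 7 ^ d := by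
    intro b _
    refine card_le_pow_of_forall_mem_Ico _ (fun i => b i / 2 ^ m - 3) fun a ha i => ?_
    obtain ⟨haS, rfl⟩ := Finset.mem_filter.1 ha
    have h := (hg a haS).1 i
    have h2 : (0 : ℤ) < 2 ^ m := by positivity
    have h1 := (Int.le_ediv_iff_mul_le h2).2 (by linarith [h.1] : ((a i : ℤ) - 3) * 2 ^ m ≤ g a i)
    have h3 := (Int.ediv_lt_iff_lt_mul h2).2 (by linarith [h.2] : g a i < ((a i : ℤ) + 4) * 2 ^ m)
    push_cast
    omega
  have hvol : ∀ b ∈ S.image g, (holes E (5 * 2 ^ m)).indicator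
      (fun p => volume (dyadicCube d p.1 p.2)) (k + m, b) = 2⁻¹ ^ ((k + m) * d) := by
    intro b hb
    obtain ⟨a, haS, rfl⟩ := Finset.mem_image.1 hb
    rw [Set.indicator_of_mem (hg a haS).2, volume_dyadicCube]
  calc _ = (S.card : ℝ≥0∞) * 2⁻¹ ^ (k * d) := by
        rw [tsum_fintype, ← Finset.sum_filter]
        simp [S, dyCube_eq, volume_dyadicCube]
    _ ≤ 7 ^ d * ((S.image g).card : ℝ≥0∞) * 2⁻¹ ^ (k * d) := by
        gcongr
        exact_mod_cast Finset.card_le_mul_card_image S _ hfiber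
    _ = 7 ^ d * ((S.image g).card : ℝ≥0∞) * 2⁻¹ ^ (k * d) * (2 ^ (m * d) * 2⁻¹ ^ (m * d)) := by
        rw [two_pow_mul_inv_two_pow, mul_one]
    _ = 7 ^ d * 2 ^ (m * d) * ∑ b ∈ S.image g, (holes E (5 * 2 ^ m)).indicator
          (fun p => volume (dyadicCube d p.1 p.2)) (k + m, b) := by
        rw [Finset.sum_congr rfl hvol, Finset.sum_const, nsmul_eq_mul, add_mul, pow_add]
        ring
    _ ≤ _ := by
        gcongr
        exact ENNReal.sum_le_tsum _

def boundaryLayer (lo : Fin d → ℤ) (S c : ℕ) : Finset (Fin d → ℤ) :=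
  (Fintype.piFinset fun i => Finset.Ico (lo i) (lo i + S)).filter
    fun b => ∃ i, b i < lo i + c ∨ lo i + S ≤ b i + c

lemma card_boundaryLayer_mul_le (lo : Fin d → ℤ) (S c : ℕ) :
    (boundaryLayer lo S c).card * S ≤ 2 * c * d * S ^ d := by
  classical
  set box : Fin d → Finset ℤ := fun i => Finset.Ico (lo i) (lo i + S)
  set border : Fin d → Finset ℤ := fun i =>
    Finset.Ico (lo i) (lo i + c) ∪ Finset.Ico (lo i + S - c) (lo i + S)
  set slab : Fin d → Finset (Fin d → ℤ) := fun i₀ =>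
    Fintype.piFinset (Function.update box i₀ (border i₀))
  have hcover : boundaryLayer lo S c ⊆ Finset.univ.biUnion slab := by
    intro b hb
    simp only [boundaryLayer, Finset.mem_filter, Fintype.mem_piFinset, Finset.mem_Ico] at hb
    obtain ⟨hbox, i₀, hi₀⟩ := hb
    refine Finset.mem_biUnion.2 ⟨i₀, Finset.mem_univ _, Fintype.mem_piFinset.2 fun i => ?_⟩
    rcases eq_or_ne i i₀ with rfl | hi
    · simp only [Function.update_self, border, Finset.mem_union, Finset.mem_Ico]
      have := hbox i
      omega
    · simpa [Function.update_of_ne hi, box] using hbox i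
  have hslab : ∀ i₀, (slab i₀).card * S ≤ 2 * c * S ^ d := by
    intro i₀
    have hbox : ∀ i, (box i).card = S := fun i => by simp [box]
    have hborder : (border i₀).card ≤ 2 * c := (Finset.card_union_le _ _).trans (by simp; omega)
    calc (slab i₀).card * S
        = (border i₀).card * ((box i₀).card * ∏ i ∈ Finset.univ.erase i₀, (box i).card) := by
          rw [Fintype.card_piFinset, ← Finset.mul_prod_erase _ _ (Finset.mem_univ i₀),
            Function.update_self, hbox i₀, Finset.prod_congr rfl fun i hi => by
              rw [Function.update_of_ne (Finset.ne_of_mem_erase hi)]]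
          ring
      _ ≤ 2 * c * S ^ d := by
          rw [Finset.mul_prod_erase _ (fun i => (box i).card) (Finset.mem_univ _)]
          simp only [hbox, Finset.prod_const, Finset.card_univ, Fintype.card_fin]
          gcongr
  calc (boundaryLayer lo S c).card * S ≤ (∑ i₀, (slab i₀).card) * S := by
        gcongr
        exact (Finset.card_le_card hcover).trans Finset.card_biUnion_le
    _ ≤ ∑ _i₀ : Fin d, 2 * c * S ^ d := by
        rw [Finset.sum_mul]
        exact Finset.sum_le_sum fun i₀ _ => hslab i₀
    _ = 2 * c * d * S ^ d := by simp; ring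

lemma mem_boundaryLayer_of_hole {E : Set (EuclideanSpace ℝ (Fin d))} {cc ℓ n : ℕ}
    {b c : Fin d → ℤ} (hc : Disjoint (dyadicCube d ℓ c) E) (hb : (ℓ + n, b) ∈ holes E cc)
    (hanc : ancestor (ℓ + n) b ℓ = c) :
    b ∈ boundaryLayer (fun i => 2 ^ n * c i) (2 ^ n) cc := by
  obtain ⟨-, e, heE, hnear⟩ := hb
  have hwin := le_ancestor_add ℓ n b
  rw [hanc] at hwin
  -- the point `e` of `E` near `b` lies outside the cube `c`, so `b` is near its boundary
  have he : e ∉ dyadicBox d (ℓ + n) (fun i => 2 ^ n * c i) (fun i => 2 ^ n * (c + 1) i) := by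
    rw [← dyadicBox_eq_refine]
    exact Set.disjoint_left.1 hc.symm heE
  simp only [dyadicBox, Set.mem_ofPred_eq, not_forall] at he
  obtain ⟨i, hi⟩ := he
  simp only [boundaryLayer, Finset.mem_filter, Fintype.mem_piFinset, Finset.mem_Ico]
  refine ⟨fun i => by push_cast; exact hwin i, i, ?_⟩
  have hbi := abs_le.1 (hnear i)
  simp only [Pi.add_apply, Pi.one_apply] at hi
  push_cast at hi ⊢
  by_cases hlow : (2 : ℝ) ^ n * c i ≤ e i * 2 ^ (ℓ + n)
  · right
    have : (2 : ℝ) ^ n * (c i + 1) ≤ e i * 2 ^ (ℓ + n) :=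
      not_lt.1 fun h => hi ⟨hlow, h⟩
    have : (2 : ℝ) ^ n * c i + 2 ^ n ≤ b i + cc := by linarith
    exact_mod_cast this
  · left
    have : (b i : ℝ) < 2 ^ n * c i + cc := by linarith
    exact_mod_cast this

lemma tsum_prod_eq_tsum_add_of_eq_zero {β : Type*} {f : ℕ × β → ℝ≥0∞} {ℓ : ℕ}
    (hf : ∀ p, p.1 < ℓ → f p = 0) : ∑' p, f p = ∑' (n : ℕ) (b : β), f (ℓ + n, b) := by
  rw [← ENNReal.tsum_prod (f := fun n b => f (ℓ + n, b))]
  refine (Function.Injective.tsum_eq (g := fun q : ℕ × β => (ℓ + q.1, q.2)) ?_ fun p hp => ?_).symm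
  · intro q q' h
    simp only [Prod.mk.injEq, add_right_inj] at h
    exact Prod.ext h.1 h.2
  · exact ⟨(p.1 - ℓ, p.2), Prod.ext (Nat.add_sub_cancel' (not_lt.1 fun h => hp (hf p h))) rfl⟩

lemma natCast_mul_inv_two_pow_le {N M n : ℕ} (h : N * 2 ^ n ≤ M * (2 ^ n) ^ d) :
    (N : ℝ≥0∞) * 2⁻¹ ^ (n * d) ≤ M * 2⁻¹ ^ n :=
  calc (N : ℝ≥0∞) * 2⁻¹ ^ (n * d) = N * 2⁻¹ ^ (n * d) * (2 ^ n * 2⁻¹ ^ n) := by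
        rw [two_pow_mul_inv_two_pow, mul_one]
    _ = (N * 2 ^ n : ℕ) * 2⁻¹ ^ (n * d) * 2⁻¹ ^ n := by push_cast; ring
    _ ≤ (M * (2 ^ n) ^ d : ℕ) * 2⁻¹ ^ (n * d) * 2⁻¹ ^ n := by gcongr
    _ = M * 2⁻¹ ^ n * (2 ^ (n * d) * 2⁻¹ ^ (n * d)) := by push_cast; rw [← pow_mul]; ring
    _ = M * 2⁻¹ ^ n := by rw [two_pow_mul_inv_two_pow, mul_one]

lemma tsum_holes_below_le {E : Set (EuclideanSpace ℝ (Fin d))} (cc : ℕ) {ℓ : ℕ}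
    {c : Fin d → ℤ} (hc : Disjoint (dyadicCube d ℓ c) E) :
    ∑' p : ℕ × (Fin d → ℤ), (if p ∈ holes E cc ∧ ℓ ≤ p.1 ∧ ancestor p.1 p.2 ℓ = c
        then volume (dyadicCube d p.1 p.2) else 0)
      ≤ 4 * d * cc * volume (dyadicCube d ℓ c) := by
  set F : ℕ × (Fin d → ℤ) → ℝ≥0∞ := fun p => if p ∈ holes E cc ∧ ℓ ≤ p.1 ∧
    ancestor p.1 p.2 ℓ = c then volume (dyadicCube d p.1 p.2) else 0
  have hlevel : ∀ n, ∑' b, F (ℓ + n, b) ≤ 2 * cc * d * 2⁻¹ ^ (ℓ * d) * 2⁻¹ ^ n := by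
    intro n
    set L := boundaryLayer (fun i => 2 ^ n * c i) (2 ^ n) cc
    have hL : (L.card : ℝ≥0∞) * 2⁻¹ ^ (n * d) ≤ (2 * cc * d : ℕ) * 2⁻¹ ^ n :=
      natCast_mul_inv_two_pow_le (card_boundaryLayer_mul_le _ _ _)
    calc ∑' b, F (ℓ + n, b)
        ≤ ∑' b, (L : Set (Fin d → ℤ)).indicator (fun _ => 2⁻¹ ^ ((ℓ + n) * d)) b := by
          refine ENNReal.tsum_le_tsum fun b => ?_
          by_cases hb : (ℓ + n, b) ∈ holes E cc ∧ ℓ ≤ ℓ + n ∧ ancestor (ℓ + n) b ℓ = c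
          · rw [Set.indicator_of_mem (Finset.mem_coe.2 (mem_boundaryLayer_of_hole hc hb.1 hb.2.2))]
            simp [F, if_pos hb, volume_dyadicCube]
          · simp [F, if_neg hb]
      _ = 2⁻¹ ^ (ℓ * d) * (L.card * 2⁻¹ ^ (n * d)) := by
          rw [← sum_eq_tsum_indicator, Finset.sum_const, nsmul_eq_mul, add_mul, pow_add]
          ring
      _ ≤ 2⁻¹ ^ (ℓ * d) * ((2 * cc * d : ℕ) * 2⁻¹ ^ n) := by gcongr
      _ = 2 * cc * d * 2⁻¹ ^ (ℓ * d) * 2⁻¹ ^ n := by push_cast; ring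
  calc ∑' p, F p = ∑' n, ∑' b, F (ℓ + n, b) :=
        tsum_prod_eq_tsum_add_of_eq_zero fun p hp => if_neg fun h => hp.not_ge h.2.1
    _ ≤ ∑' n : ℕ, (2 * cc * d * 2⁻¹ ^ (ℓ * d) * 2⁻¹ ^ n : ℝ≥0∞) := ENNReal.tsum_le_tsum hlevel
    _ = 4 * d * cc * volume (dyadicCube d ℓ c) := by
        rw [ENNReal.tsum_mul_left, ENNReal.tsum_geometric, ENNReal.one_sub_inv_two, inv_inv,
          volume_dyadicCube]
        ring

def maxDisjointLevel (E : Set (EuclideanSpace ℝ (Fin d))) (p : ℕ × (Fin d → ℤ)) : ℕ :=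
  sInf {ℓ | Disjoint (dyadicCube d ℓ (ancestor p.1 p.2 ℓ)) E}

def maxDisjointAncestor (E : Set (EuclideanSpace ℝ (Fin d))) (p : ℕ × (Fin d → ℤ)) :
    ℕ × (Fin d → ℤ) :=
  (maxDisjointLevel E p, ancestor p.1 p.2 (maxDisjointLevel E p))

section maxDisjointAncestor

variable {E : Set (EuclideanSpace ℝ (Fin d))} {p q : ℕ × (Fin d → ℤ)}

lemma maxDisjointLevel_le (hp : Disjoint (dyadicCube d p.1 p.2) E) :
    maxDisjointLevel E p ≤ p.1 :=
  Nat.sInf_le (by simpa using hp)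

lemma disjoint_maxDisjointAncestor (hp : Disjoint (dyadicCube d p.1 p.2) E) :
    Disjoint (dyadicCube d (maxDisjointAncestor E p).1 (maxDisjointAncestor E p).2) E :=
  Nat.sInf_mem (s := {ℓ | Disjoint (dyadicCube d ℓ (ancestor p.1 p.2 ℓ)) E})
    ⟨p.1, by simpa using hp⟩

lemma dyadicCube_subset_maxDisjointAncestor (hp : Disjoint (dyadicCube d p.1 p.2) E) :
    dyadicCube d p.1 p.2 ⊆
      dyadicCube d (maxDisjointAncestor E p).1 (maxDisjointAncestor E p).2 :=
  dyadicCube_subset_ancestor (maxDisjointLevel_le hp) p.2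

lemma maxDisjointAncestor_eq_of_mem (hp : Disjoint (dyadicCube d p.1 p.2) E)
    (hq : Disjoint (dyadicCube d q.1 q.2) E)
    (hle : (maxDisjointAncestor E p).1 ≤ (maxDisjointAncestor E q).1) {x : EuclideanSpace ℝ (Fin d)}
    (hxp : x ∈ dyadicCube d (maxDisjointAncestor E p).1 (maxDisjointAncestor E p).2)
    (hxq : x ∈ dyadicCube d (maxDisjointAncestor E q).1 (maxDisjointAncestor E q).2) :
    maxDisjointAncestor E p = maxDisjointAncestor E q := by
  set ℓ := maxDisjointLevel E p
  have hle' : ℓ ≤ maxDisjointLevel E q := hle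
  -- the ancestor of `q` at the level of `p`'s maximal cube is that cube, so it is disjoint from `E`
  have hanc : ancestor q.1 q.2 ℓ = ancestor p.1 p.2 ℓ := by
    rw [← ancestor_ancestor hle' (maxDisjointLevel_le hq)]
    exact ancestor_eq_of_mem hle' hxq hxp
  have hdisj : Disjoint (dyadicCube d ℓ (ancestor q.1 q.2 ℓ)) E := by
    rw [hanc]
    exact disjoint_maxDisjointAncestor hp
  have hlevel : maxDisjointLevel E q = ℓ := le_antisymm (Nat.sInf_le hdisj) hle'
  refine Prod.ext hlevel.symm ?_
  change ancestor p.1 p.2 ℓ = ancestor q.1 q.2 (maxDisjointLevel E q)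
  rw [hlevel, hanc]

lemma pairwise_disjoint_maxDisjointAncestor (s : Set (ℕ × (Fin d → ℤ)))
    (hs : ∀ p ∈ s, Disjoint (dyadicCube d p.1 p.2) E) :
    Pairwise (Function.onFun Disjoint
      fun P : maxDisjointAncestor E '' s => dyadicCube d P.1.1 P.1.2) := by
  rintro ⟨_, p, hp, rfl⟩ ⟨_, q, hq, rfl⟩ hne
  refine Set.disjoint_left.2 fun x hxp hxq => hne (Subtype.ext ?_)
  rcases le_total (maxDisjointAncestor E p).1 (maxDisjointAncestor E q).1 with h | h
  · exact maxDisjointAncestor_eq_of_mem (hs p hp) (hs q hq) h hxp hxq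
  · exact (maxDisjointAncestor_eq_of_mem (hs q hq) (hs p hp) h hxq hxp).symm

end maxDisjointAncestor

lemma maxDisjointAncestor_subset_dyadicBox {E : Set (EuclideanSpace ℝ (Fin d))}
    (hE : E ⊆ unitCube d) {cc : ℕ} {p : ℕ × (Fin d → ℤ)} (hp : p ∈ holes E cc) :
    dyadicCube d (maxDisjointAncestor E p).1 (maxDisjointAncestor E p).2 ⊆
      dyadicBox d 0 (fun _ => -cc - 1) (fun _ => cc + 2) := by
  obtain ⟨hpE, e, heE, hnear⟩ := hp
  have h2p : (1 : ℝ) ≤ 2 ^ p.1 := one_le_pow₀ one_le_two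
  set y : EuclideanSpace ℝ (Fin d) := WithLp.toLp 2 fun i => (p.2 i : ℝ) / 2 ^ p.1
  have hy : y ∈ dyadicCube d p.1 p.2 :=
    mem_dyadicCube_iff.2 fun i => by simp [y, div_mul_cancel₀ _ (by positivity : (2 : ℝ) ^ p.1 ≠ 0)]
  intro z hz i
  have hzy := abs_sub_mul_lt_one_of_mem_dyadicCube hz
    (dyadicCube_subset_maxDisjointAncestor hpE hy) i
  have h2ℓ : (1 : ℝ) ≤ 2 ^ (maxDisjointAncestor E p).1 := one_le_pow₀ one_le_two
  have hye : |y i - e i| ≤ cc := by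
    have : y i - e i = (p.2 i - e i * 2 ^ p.1) / 2 ^ p.1 := by
      simp only [y]
      field_simp
    rw [this, abs_div, abs_of_pos (by positivity : (0 : ℝ) < 2 ^ p.1), div_le_iff₀ (by positivity)]
    nlinarith [hnear i, (Nat.cast_nonneg cc : (0 : ℝ) ≤ cc)]
  have he := hE heE i
  have hzy' : |z i - y i| < 1 := by nlinarith [abs_nonneg (z i - y i)]
  rw [abs_lt] at hzy'
  rw [abs_le] at hye
  simp only [pow_zero, mul_one]
  push_cast
  constructor <;> nlinarith

theorem tsum_holes_le {E : Set (EuclideanSpace ℝ (Fin d))} (hE : E ⊆ unitCube d) (cc : ℕ) :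
    ∑' p, (holes E cc).indicator (fun p => volume (dyadicCube d p.1 p.2)) p
      ≤ 4 * d * cc * (2 * cc + 3) ^ d := by
  set M := maxDisjointAncestor E '' holes E cc
  calc ∑' p, (holes E cc).indicator (fun p => volume (dyadicCube d p.1 p.2)) p
      ≤ ∑' (p : ℕ × (Fin d → ℤ)) (P : M), (if p ∈ holes E cc ∧ P.1.1 ≤ p.1 ∧
          ancestor p.1 p.2 P.1.1 = P.1.2 then volume (dyadicCube d p.1 p.2) else 0) := by
        refine ENNReal.tsum_le_tsum fun p => ?_
        by_cases hp : p ∈ holes E cc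
        · rw [Set.indicator_of_mem hp]
          refine le_of_eq_of_le ?_ (ENNReal.le_tsum ⟨maxDisjointAncestor E p, p, hp, rfl⟩)
          rw [if_pos ⟨hp, maxDisjointLevel_le hp.1, rfl⟩]
        · simp [hp]
    _ = ∑' (P : M) (p : ℕ × (Fin d → ℤ)), (if p ∈ holes E cc ∧ P.1.1 ≤ p.1 ∧
          ancestor p.1 p.2 P.1.1 = P.1.2 then volume (dyadicCube d p.1 p.2) else 0) :=
        ENNReal.tsum_comm
    _ ≤ ∑' P : M, 4 * d * cc * volume (dyadicCube d P.1.1 P.1.2) := by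
        refine ENNReal.tsum_le_tsum fun ⟨_, p, hp, hP⟩ => ?_
        subst hP
        exact tsum_holes_below_le cc (disjoint_maxDisjointAncestor hp.1)
    _ = 4 * d * cc * volume (⋃ P : M, dyadicCube d P.1.1 P.1.2) := by
        rw [ENNReal.tsum_mul_left, measure_iUnion
          (pairwise_disjoint_maxDisjointAncestor _ fun p hp => hp.1)
          fun _ => measurableSet_dyadicBox _ _ _]
    _ ≤ 4 * d * cc * volume (dyadicBox d 0 (fun _ => -cc - 1) (fun _ => cc + 2)) := by
        gcongr
        exact Set.iUnion_subset fun ⟨_, p, hp, hP⟩ =>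
          hP ▸ maxDisjointAncestor_subset_dyadicBox hE hp
    _ = 4 * d * cc * (2 * cc + 3) ^ d := by
        have h : (cc : ℝ) + 2 - (-cc - 1) = (2 * cc + 3 : ℕ) := by push_cast; ring
        simp only [volume_dyadicBox, Int.cast_add, Int.cast_sub, Int.cast_neg, Int.cast_natCast,
          Int.cast_ofNat, Int.cast_one, pow_zero, div_one, h, ENNReal.ofReal_natCast,
          Finset.prod_const, Finset.card_univ, Fintype.card_fin]
        push_cast
        rfl

end CarlesonPacking

/-- **Carleson packing for sparse cubes.** For every `ε > 0` and `d` there is `K̃ > 0`,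
depending only on `ε` and `d`, such that for every `E ⊆ [0,1]^d`, the sum of `λ(Q)` over
all dyadic cubes `Q ⊆ [0,1]^d` with `3Q ∩ E ≠ ∅` and `sparse(E,7Q) ≥ ε` is at most `K̃`. -/
theorem carleson_packing_sparse_cubes (d : ℕ) (ε : ℝ) (hε : 0 < ε) :
    ∃ K : ℝ, 0 < K ∧
      ∀ E : Set (EuclideanSpace ℝ (Fin d)), E ⊆ unitCube d →
        (∑' (k : ℕ) (a : Fin d → Fin (2 ^ k)),
            if (dyCube3 d k (fun i => (a i : ℕ)) ∩ E).Nonempty ∧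
                ε ≤ sparse7 E k (fun i => (a i : ℕ))
              then volume (dyCube d k (fun i => (a i : ℕ)))
              else 0) ≤ ENNReal.ofReal K := by
  obtain ⟨m, hm⟩ : ∃ m : ℕ, √d ≤ 7 * ε / 2 * 2 ^ m := by
    obtain ⟨m, hm⟩ := pow_unbounded_of_one_lt (√d / (7 * ε / 2)) one_lt_two
    rw [div_lt_iff₀ (by positivity)] at hm
    exact ⟨m, by linarith⟩
  set cc := 5 * 2 ^ m
  set N : ℕ := 7 ^ d * 2 ^ (m * d) * (4 * d * cc * (2 * cc + 3) ^ d)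
  refine ⟨N + 1, by positivity, fun E hE => ?_⟩
  set v : ℕ × (Fin d → ℤ) → ℝ≥0∞ := (CarlesonPacking.holes E cc).indicator
    fun p => volume (CarlesonPacking.dyadicCube d p.1 p.2)
  calc _ ≤ ∑' k : ℕ, 7 ^ d * 2 ^ (m * d) * ∑' b, v (k + m, b) :=
        ENNReal.tsum_le_tsum (CarlesonPacking.tsum_sparse_le_tsum_holes hε hm)
    _ ≤ 7 ^ d * 2 ^ (m * d) * ∑' p, v p := by
        rw [ENNReal.tsum_mul_left, ENNReal.tsum_prod (f := fun j b => v (j, b))]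
        exact mul_le_mul_right
          (ENNReal.tsum_comp_le_tsum_of_injective (add_left_injective m) fun j => ∑' b, v (j, b)) _
    _ ≤ 7 ^ d * 2 ^ (m * d) * (4 * d * cc * (2 * cc + 3) ^ d) := by
        gcongr
        exact CarlesonPacking.tsum_holes_le hE cc
    _ = N := by simp [N]
    _ = ENNReal.ofReal N := (ENNReal.ofReal_natCast N).symm
    _ ≤ ENNReal.ofReal (N + 1) := ENNReal.ofReal_le_ofReal (by linarith)
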